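/- Let M be a skew-symmetric duality on (F_{p^{2e}}, +) (χ_x(x) = 1 for all x), ξ a fixed primitive p-th root of unity, and C an additive code with F_p-generator rows G_1, ..., G_{2s} satisfying χ_{G_i}(G_j) = ξ for all i < j. Then C ∩ C^M = {0}. -/

import Mathlib

/-- A duality `M` on a finite abelian group `G`: an isomorphism `x ↦ χ_x`
from `G` onto its character group `Hom(G, ℂ*)`. -/
structure Duality (G : Type*) [AddCommGroup G] where
  χ : G → G → ℂˣ
  add_left : ∀ x y z : G, χ (x + y) z = χ x z * χ y z
  add_right : ∀ x y z : G, χ x (y + z) = χ x y * χ x z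
  bij : ∀ ψ : G → ℂˣ, (∀ y z : G, ψ (y + z) = ψ y * ψ z) → ∃! x : G, χ x = ψ

namespace Duality

variable {G : Type*} [AddCommGroup G]

lemma zero_left (M : Duality G) (z : G) : M.χ 0 z = 1 := by
  have h := M.add_left 0 0 z
  rw [add_zero] at h
  exact mul_left_cancel (h.symm.trans (mul_one _).symm)

lemma zero_right (M : Duality G) (z : G) : M.χ z 0 = 1 := by
  have h := M.add_right z 0 0
  rw [add_zero] at h
  exact mul_left_cancel (h.symm.trans (mul_one _).symm)

lemma neg_left (M : Duality G) (x z : G) : M.χ (-x) z = (M.χ x z)⁻¹ := by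
  have h := M.add_left x (-x) z
  rw [add_neg_cancel, M.zero_left] at h
  exact (inv_eq_of_mul_eq_one_right h.symm).symm

lemma neg_right (M : Duality G) (x z : G) : M.χ z (-x) = (M.χ z x)⁻¹ := by
  have h := M.add_right z x (-x)
  rw [add_neg_cancel, M.zero_right] at h
  exact (inv_eq_of_mul_eq_one_right h.symm).symm

/-- The `M`-dual of an additive code `C ≤ G^n`:
`C^M = {x : ∏ i, χ_{x i}(c i) = 1 for all c ∈ C}`. -/
def dualCode {n : ℕ} (M : Duality G) (C : AddSubgroup (Fin n → G)) :
    AddSubgroup (Fin n → G) where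
  carrier := {x | ∀ c ∈ C, ∏ i, M.χ (x i) (c i) = 1}
  zero_mem' := by
    intro c _
    simp [Duality.zero_left]
  add_mem' := by
    intro a b ha hb c hc
    have h : ∏ i, M.χ ((a + b) i) (c i)
        = (∏ i, M.χ (a i) (c i)) * ∏ i, M.χ (b i) (c i) := by
      rw [← Finset.prod_mul_distrib]
      exact Finset.prod_congr rfl fun i _ => M.add_left (a i) (b i) (c i)
    rw [h, ha c hc, hb c hc, mul_one]
  neg_mem' := by
    intro a ha c hc
    have h : ∏ i, M.χ ((-a) i) (c i) = (∏ i, M.χ (a i) (c i))⁻¹ := by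
      rw [← Finset.prod_inv_distrib]
      exact Finset.prod_congr rfl fun i _ => M.neg_left (a i) (c i)
    rw [h, ha c hc, inv_one]

/-- The `Mᵀ`-dual of an additive code `C ≤ G^n`, for the transpose duality
`χ'_x(y) = χ_y(x)`: `C^{Mᵀ} = {x : ∏ i, χ_{c i}(x i) = 1 for all c ∈ C}`. -/
def dualTCode {n : ℕ} (M : Duality G) (C : AddSubgroup (Fin n → G)) :
    AddSubgroup (Fin n → G) where
  carrier := {x | ∀ c ∈ C, ∏ i, M.χ (c i) (x i) = 1}
  zero_mem' := by
    intro c _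
    simp [Duality.zero_right]
  add_mem' := by
    intro a b ha hb d hd
    have h : ∏ i, M.χ (d i) ((a + b) i)
        = (∏ i, M.χ (d i) (a i)) * ∏ i, M.χ (d i) (b i) := by
      rw [← Finset.prod_mul_distrib]
      exact Finset.prod_congr rfl fun i _ => M.add_right (d i) (a i) (b i)
    rw [h, ha d hd, hb d hd, mul_one]
  neg_mem' := by
    intro a ha d hd
    have h : ∏ i, M.χ (d i) ((-a) i) = (∏ i, M.χ (d i) (a i))⁻¹ := by
      rw [← Finset.prod_inv_distrib]
      exact Finset.prod_congr rfl fun i _ => M.neg_right (a i) (d i)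
    rw [h, ha d hd, inv_one]

/-- The `M`-dual of a length-one additive code `C ≤ G`. -/
def dualOne (M : Duality G) (C : AddSubgroup G) : AddSubgroup G where
  carrier := {y | ∀ c ∈ C, M.χ y c = 1}
  zero_mem' := by intro c _; exact M.zero_left c
  add_mem' := by
    intro a b ha hb c hc
    rw [M.add_left a b c, ha c hc, hb c hc, mul_one]
  neg_mem' := by
    intro a ha c hc
    rw [M.neg_left a c, ha c hc, inv_one]

/-- The character `χ` extended coordinatewise to vectors:
`χ_u(v) = ∏ i, χ_{u i}(v i)`. -/
def chiVec {n : ℕ} (M : Duality G) (u v : Fin n → G) : ℂˣ :=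
  ∏ i, M.χ (u i) (v i)

end Duality

/-!
Write an element of `C ∩ C^M` as `x = ∑ cᵢ Gᵢ`. By skew-symmetry `χ_{Gᵢ}(Gⱼ)` is `ξ`, `1` or
`ξ⁻¹` according as `i < j`, `i = j` or `i > j`, so testing `x` against `Gⱼ` shows that the
elements `aᵢ = ξ ^ cᵢ` satisfy `∏_{i<j} aᵢ = ∏_{i>j} aᵢ` for every `j`. Comparing consecutive
`j` gives `aⱼ aⱼ₊₁ = 1`; as there is an even number of rows the total product is `1`, while
`j = 0` shows that it equals `a₀`. Hence every `aᵢ = 1`, i.e. `p ∣ cᵢ`, and `cᵢ Gᵢ = 0` because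
`p = 0` in `F`, a field with `p ^ (2e)` elements.
-/

open Finset

theorem Fintype.prod_eq_prod_Iio_mul_mul_prod_Ioi {ι β : Type*} [Fintype ι] [LinearOrder ι]
    [LocallyFiniteOrderTop ι] [LocallyFiniteOrderBot ι] [CommMonoid β] (f : ι → β) (j : ι) :
    ∏ i, f i = (∏ i ∈ Iio j, f i) * f j * ∏ i ∈ Ioi j, f i := by
  rw [← prod_mul_prod_compl {j}, ← Ioi_disjUnion_Iio, prod_disjUnion, prod_singleton]
  ac_rfl

section

variable {α : Type*} [CommGroup α]

theorem eq_one_of_prod_range_eq_prod_Ioo {N : ℕ} (hN : Even N) {a : ℕ → α}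
    (h : ∀ j < N, ∏ i ∈ range j, a i = ∏ i ∈ Ioo j N, a i) {i : ℕ} (hi : i < N) :
    a i = 1 := by
  have hpair : ∀ j, j + 1 < N → a j * a (j + 1) = 1 := by
    intro j hj
    have hj' := h (j + 1) hj
    rw [prod_range_succ, h j (by omega), ← Ico_add_one_left_eq_Ioo j, ← Ioo_insert_left hj,
      prod_insert left_notMem_Ioo] at hj'
    rwa [mul_right_comm, mul_eq_right, mul_comm] at hj'
  have htotal : ∀ k, 2 * k ≤ N → ∏ i ∈ range (2 * k), a i = 1 := by
    intro k
    induction k with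
    | zero => simp
    | succ k ih =>
      intro hk
      rw [mul_add_one, prod_range_succ, prod_range_succ, mul_assoc, hpair _ (by omega),
        mul_one, ih (by omega)]
  have ha0 : a 0 = 1 := by
    have hN0 : 0 < N := by omega
    have h0 := h 0 hN0
    rw [prod_range_zero, ← Ico_add_one_left_eq_Ioo] at h0
    obtain ⟨s, hs⟩ := hN
    have hall := htotal s (by omega)
    rwa [two_mul, ← hs, range_eq_Ico, prod_eq_prod_Ico_succ_bot hN0, ← h0, mul_one] at hall
  induction i with
  | zero => exact ha0
  | succ i ih => simpa [ih (by omega)] using hpair i hi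

theorem Fin.eq_one_of_prod_Iio_eq_prod_Ioi {N : ℕ} (hN : Even N) {a : Fin N → α}
    (h : ∀ j, ∏ i ∈ Iio j, a i = ∏ i ∈ Ioi j, a i) : a = 1 := by
  let b : ℕ → α := fun k => if hk : k < N then a ⟨k, hk⟩ else 1
  have hb : ∀ s : Finset (Fin N), ∏ i ∈ s, a i = ∏ k ∈ s.map Fin.valEmbedding, b k := by
    simp [b]
  have hb' : ∀ j < N, ∏ i ∈ range j, b i = ∏ i ∈ Ioo j N, b i := fun j hj => by
    simpa [hb, Fin.map_valEmbedding_Iio, Fin.map_valEmbedding_Ioi, Nat.Iio_eq_range] using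
      h ⟨j, hj⟩
  funext i
  simpa [b] using eq_one_of_prod_range_eq_prod_Ioo hN hb' i.2

end

namespace Duality

variable {G : Type*} [AddCommGroup G] {n : ℕ} (M : Duality G)

lemma chiVec_add_left (u v w : Fin n → G) :
    M.chiVec (u + v) w = M.chiVec u w * M.chiVec v w := by
  simp only [chiVec, Pi.add_apply, M.add_left, prod_mul_distrib]

lemma chiVec_add_right (u v w : Fin n → G) :
    M.chiVec u (v + w) = M.chiVec u v * M.chiVec u w := by
  simp only [chiVec, Pi.add_apply, M.add_right, prod_mul_distrib]

def chiVecLeft (w : Fin n → G) : (Fin n → G) →+ Additive ℂˣ :=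
  AddMonoidHom.mk' (fun u => .ofMul (M.chiVec u w)) (M.chiVec_add_left · · w)

lemma chiVec_sum_zsmul_left {ι : Type*} [Fintype ι] (c : ι → ℤ) (u : ι → Fin n → G)
    (w : Fin n → G) : M.chiVec (∑ i, c i • u i) w = ∏ i, M.chiVec (u i) w ^ c i := by
  have h := map_sum (M.chiVecLeft w) (fun i => c i • u i) univ
  simp only [map_zsmul] at h
  exact congrArg Additive.toMul h

lemma chiVec_self (hskew : ∀ x : G, M.χ x x = 1) (u : Fin n → G) : M.chiVec u u = 1 :=
  prod_eq_one fun i _ => hskew (u i)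

lemma chiVec_swap (hskew : ∀ x : G, M.χ x x = 1) (u v : Fin n → G) :
    M.chiVec v u = (M.chiVec u v)⁻¹ := by
  have h := M.chiVec_self hskew (u + v)
  rw [chiVec_add_left, chiVec_add_right, chiVec_add_right, M.chiVec_self hskew,
    M.chiVec_self hskew, one_mul, mul_one] at h
  exact eq_inv_of_mul_eq_one_right h

variable {ι : Type*} [Fintype ι] [LinearOrder ι] [LocallyFiniteOrderTop ι]
  [LocallyFiniteOrderBot ι]

lemma prod_Iio_eq_prod_Ioi_of_chiVec_sum_eq_one (hskew : ∀ x : G, M.χ x x = 1) {ξ : ℂˣ}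
    {rows : ι → Fin n → G} (h : ∀ i j, i < j → M.chiVec (rows i) (rows j) = ξ) (c : ι → ℤ)
    (j : ι) (hj : M.chiVec (∑ i, c i • rows i) (rows j) = 1) :
    ∏ i ∈ Iio j, ξ ^ c i = ∏ i ∈ Ioi j, ξ ^ c i := by
  have hIio : ∏ i ∈ Iio j, M.chiVec (rows i) (rows j) ^ c i = ∏ i ∈ Iio j, ξ ^ c i :=
    prod_congr rfl fun i hi => by rw [h i j (mem_Iio.1 hi)]
  have hIoi : ∏ i ∈ Ioi j, M.chiVec (rows i) (rows j) ^ c i = (∏ i ∈ Ioi j, ξ ^ c i)⁻¹ := by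
    rw [← prod_inv_distrib]
    exact prod_congr rfl fun i hi => by rw [M.chiVec_swap hskew, h j i (mem_Ioi.1 hi), inv_zpow]
  rwa [M.chiVec_sum_zsmul_left, Fintype.prod_eq_prod_Iio_mul_mul_prod_Ioi _ j, hIio, hIoi,
    M.chiVec_self hskew, one_zpow, mul_one, mul_inv_eq_one] at hj

end Duality

theorem acd_of_chi_eq_primitiveRoot_general (p e n s : ℕ)
    {F : Type*} [Field F] [Fintype F] (hcard : Fintype.card F = p ^ (2 * e))
    (M : Duality F) (hskew : ∀ x : F, M.χ x x = 1)
    (ξ : ℂˣ) (hξ : IsPrimitiveRoot ξ p)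
    (rows : Fin (2 * s) → (Fin n → F))
    (h : ∀ i j : Fin (2 * s), i < j → M.chiVec (rows i) (rows j) = ξ) :
    AddSubgroup.closure (Set.range rows) ⊓
      M.dualCode (AddSubgroup.closure (Set.range rows)) = ⊥ := by
  have hpF : (p : F) = 0 := by
    have hcard0 := FiniteField.cast_card_eq_zero F
    rw [hcard, Nat.cast_pow] at hcard0
    exact eq_zero_of_pow_eq_zero hcard0
  refine eq_bot_iff.2 fun x ⟨hxC, hxdual⟩ => ?_
  obtain ⟨c, rfl⟩ := AddSubgroup.exists_of_mem_closure_range _ _ hxC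
  have hξc : (fun i => ξ ^ c i) = 1 :=
    Fin.eq_one_of_prod_Iio_eq_prod_Ioi (even_two_mul s) fun j =>
      M.prod_Iio_eq_prod_Ioi_of_chiVec_sum_eq_one hskew h c j
        (hxdual _ (AddSubgroup.subset_closure ⟨j, rfl⟩))
  refine AddSubgroup.mem_bot.2 (sum_eq_zero fun i _ => ?_)
  obtain ⟨k, hk⟩ := (hξ.zpow_eq_one_iff_dvd _).1 (congrFun hξc i)
  ext t
  simp [hk, zsmul_eq_mul, hpF]

/-- If `M` is a skew-symmetric duality, `ξ` a primitive `p`-th root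
of unity, and the generator rows `G_1, …, G_{2s}` satisfy `χ_{G_i}(G_j) = ξ` for
all `i < j`, then the generated code is ACD. -/
theorem acd_of_chi_eq_primitiveRoot (p e n s : ℕ) (hp : p.Prime)
    {F : Type*} [Field F] [Fintype F] (hcard : Fintype.card F = p ^ (2 * e))
    (M : Duality F) (hskew : ∀ x : F, M.χ x x = 1)
    (ξ : ℂˣ) (hξ : IsPrimitiveRoot ξ p)
    (rows : Fin (2 * s) → (Fin n → F))
    (h : ∀ i j : Fin (2 * s), i < j → M.chiVec (rows i) (rows j) = ξ) :
    AddSubgroup.closure (Set.range rows) ⊓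
      M.dualCode (AddSubgroup.closure (Set.range rows)) = ⊥ :=
  acd_of_chi_eq_primitiveRoot_general p e n s hcard M hskew ξ hξ rows h
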